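/- (High-temperature regime.) If β·γ_s < 2, then the variational functional F is strictly decreasing on (0,∞); consequently r = 0 is the unique maximizer of F over [0,∞). In particular, for every fixed choice of the remaining parameters there exists β_0 > 0 such that for all β ∈ (0, β_0) the unique maximizer is r_β = 0. -/

import Mathlib

open Real Filter

/-- `g_{r,x} := sqrt((x + λ_s − μ_s)² + γ_s²·r)`. -/
noncomputable def gg (gams lams mus r x : ℝ) : ℝ :=
  Real.sqrt ((x + lams - mus) ^ 2 + gams ^ 2 * r)

/-- The function `f` from Theorem 1 of the paper. Parameters:
`beta` = β, `gams` = γ_s, `lams` = λ_s, `lamf` = λ_f, `lam` = λ,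
`mus` = μ_s, `muf` = μ_f, `hs` = h_s, `hf` = h_f, `eta` = η. -/
noncomputable def ff (beta gams lams lamf lam mus muf hs hf eta r : ℝ) : ℝ :=
  (Real.exp (-(beta * muf)) + Real.exp (-(beta * (4 * lam + 2 * lamf - muf))))
      * Real.cosh (beta * hs)
    + Real.exp (-(beta * (2 * lam - hs))) * Real.cosh (beta * (eta + hf))
    + Real.exp (-(beta * (2 * lam + hs))) * Real.cosh (beta * (eta - hf))
    + Real.exp (-(beta * (lams + muf))) * Real.cosh (beta * gg gams lams mus r 0)
    + Real.exp (-(beta * (4 * lam + lams + 2 * lamf - muf)))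
      * Real.cosh (beta * gg gams lams mus r (4 * lam))
    + 2 * Real.exp (-(beta * (2 * lam + lams))) * Real.cosh (beta * hf)
      * Real.cosh (beta * gg gams lams mus r (2 * lam))

/-- The variational functional `F(r) := −γ_s·r + β⁻¹·ln f(r)`. -/
noncomputable def FF (beta gams lams lamf lam mus muf hs hf eta r : ℝ) : ℝ :=
  -(gams * r) + beta⁻¹ * Real.log (ff beta gams lams lamf lam mus muf hs hf eta r)

/-!
Since `(log cosh)' = tanh t ≤ t`, the function `t ↦ log cosh t - t² / 2` is antitone on `[0, ∞)`,
i.e. `cosh (β √u)` grows in `u` at most like `exp (β² u / 2)`. Every `r`-dependent summand of `f`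
is of the form `c · cosh (β √(a + γ_s² r))` with `c ≥ 0`, so `f (r') ≤ f r · exp (β² γ_s² (r' - r) / 2)`
for `r ≤ r'`, and therefore `F r' - F r ≤ (β γ_s / 2 - 1) γ_s (r' - r) < 0` when `β γ_s < 2`.
-/

theorem StrictAntiOn.isMaxOn_left_and_eq_left {α β : Type*} [LinearOrder α] [Preorder β]
    {f : α → β} {a : α} (hf : StrictAntiOn f (Set.Ici a)) :
    IsMaxOn f (Set.Ici a) a ∧ ∀ b ∈ Set.Ici a, IsMaxOn f (Set.Ici a) b → b = a := by
  refine ⟨fun x hx => hf.antitoneOn Set.self_mem_Ici hx hx, fun b hb hmax => ?_⟩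
  by_contra hne
  exact (hf Set.self_mem_Ici hb (lt_of_le_of_ne hb (Ne.symm hne))).not_ge (hmax Set.self_mem_Ici)

namespace Real

theorem sinh_le_mul_cosh {x : ℝ} (hx : 0 ≤ x) : sinh x ≤ x * cosh x := by
  refine hasSum_le (fun n => ?_) (hasSum_sinh x) ((hasSum_cosh x).mul_left x)
  rw [pow_succ', mul_div_assoc]
  gcongr
  exact Nat.le_succ _

theorem antitoneOn_log_cosh_sub_sq_div_two :
    AntitoneOn (fun t => log (cosh t) - t ^ 2 / 2) (Set.Ici 0) := by
  have hderiv (t : ℝ) : HasDerivAt (fun t => log (cosh t) - t ^ 2 / 2)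
      (sinh t / cosh t - ((2 : ℕ) : ℝ) * t ^ 1 / 2) t :=
    ((hasDerivAt_cosh t).log (cosh_pos t).ne').sub ((hasDerivAt_pow 2 t).div_const 2)
  refine antitoneOn_of_deriv_nonpos (convex_Ici 0)
    (fun t _ => (hderiv t).continuousAt.continuousWithinAt)
    (fun t _ => (hderiv t).differentiableAt.differentiableWithinAt) fun t ht => ?_
  rw [interior_Ici] at ht
  have htanh : sinh t / cosh t ≤ t := (div_le_iff₀ (cosh_pos t)).mpr (sinh_le_mul_cosh ht.le)
  rw [(hderiv t).deriv, pow_one, Nat.cast_ofNat]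
  linarith

theorem cosh_le_cosh_mul_exp_sq_sub_sq {x y : ℝ} (hy : 0 ≤ y) (hyx : y ≤ x) :
    cosh x ≤ cosh y * exp ((x ^ 2 - y ^ 2) / 2) := by
  have hlog : log (cosh x) ≤ log (cosh y) + (x ^ 2 - y ^ 2) / 2 := by
    have := antitoneOn_log_cosh_sub_sq_div_two hy (hy.trans hyx) hyx
    simp only at this
    linarith
  calc cosh x = exp (log (cosh x)) := (exp_log (cosh_pos x)).symm
    _ ≤ exp (log (cosh y) + (x ^ 2 - y ^ 2) / 2) := exp_le_exp.mpr hlog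
    _ = cosh y * exp ((x ^ 2 - y ^ 2) / 2) := by rw [exp_add, exp_log (cosh_pos y)]

theorem cosh_mul_sqrt_le {b p q : ℝ} (hb : 0 ≤ b) (hp : 0 ≤ p) (hpq : p ≤ q) :
    cosh (b * √q) ≤ cosh (b * √p) * exp (b ^ 2 * (q - p) / 2) := by
  have h := cosh_le_cosh_mul_exp_sq_sub_sq (by positivity)
    (mul_le_mul_of_nonneg_left (sqrt_le_sqrt hpq) hb)
  rwa [mul_pow, mul_pow, sq_sqrt hp, sq_sqrt (hp.trans hpq), ← mul_sub] at h

end Real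

section Functional

variable {beta gams lams lamf lam mus muf hs hf eta : ℝ}

theorem cosh_mul_gg_le (hbeta : 0 ≤ beta) (x : ℝ) {r r' : ℝ} (hr : 0 ≤ r) (hrr' : r ≤ r') :
    cosh (beta * gg gams lams mus r' x) ≤
      cosh (beta * gg gams lams mus r x) * exp (beta ^ 2 * gams ^ 2 * (r' - r) / 2) := by
  have h := cosh_mul_sqrt_le hbeta (p := (x + lams - mus) ^ 2 + gams ^ 2 * r)
    (q := (x + lams - mus) ^ 2 + gams ^ 2 * r') (by positivity) (by gcongr)
  rwa [add_sub_add_left_eq_sub, ← mul_sub, ← mul_assoc] at h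

theorem ff_pos (r : ℝ) : 0 < ff beta gams lams lamf lam mus muf hs hf eta r := by
  unfold ff
  positivity

theorem ff_le_ff_mul_exp (hbeta : 0 ≤ beta) {r r' : ℝ} (hr : 0 ≤ r) (hrr' : r ≤ r') :
    ff beta gams lams lamf lam mus muf hs hf eta r' ≤
      ff beta gams lams lamf lam mus muf hs hf eta r *
        exp (beta ^ 2 * gams ^ 2 * (r' - r) / 2) := by
  set E := exp (beta ^ 2 * gams ^ 2 * (r' - r) / 2)
  have hE : 1 ≤ E := one_le_exp (by have := sub_nonneg.mpr hrr'; positivity)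
  have hconst {c : ℝ} (hc : 0 ≤ c) : c ≤ c * E := le_mul_of_one_le_right hc hE
  have hcosh {c : ℝ} (x : ℝ) (hc : 0 ≤ c) :
      c * cosh (beta * gg gams lams mus r' x) ≤ c * cosh (beta * gg gams lams mus r x) * E := by
    rw [mul_assoc]
    exact mul_le_mul_of_nonneg_left (cosh_mul_gg_le hbeta x hr hrr') hc
  unfold ff
  have := hconst (c := (exp (-(beta * muf)) + exp (-(beta * (4 * lam + 2 * lamf - muf))))
    * cosh (beta * hs)) (by positivity)
  have := hconst (c := exp (-(beta * (2 * lam - hs))) * cosh (beta * (eta + hf))) (by positivity)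
  have := hconst (c := exp (-(beta * (2 * lam + hs))) * cosh (beta * (eta - hf))) (by positivity)
  have := hcosh 0 (exp_pos (-(beta * (lams + muf)))).le
  have := hcosh (4 * lam) (exp_pos (-(beta * (4 * lam + lams + 2 * lamf - muf)))).le
  have := hcosh (2 * lam)
    (c := 2 * exp (-(beta * (2 * lam + lams))) * cosh (beta * hf)) (by positivity)
  linarith

theorem FF_strictAntiOn (hgams : 0 < gams) (hbeta : 0 < beta) (hbg : beta * gams < 2) :
    StrictAntiOn (fun r => FF beta gams lams lamf lam mus muf hs hf eta r) (Set.Ici 0) := by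
  intro r hr r' _ hrr'
  have hlog : log (ff beta gams lams lamf lam mus muf hs hf eta r') ≤
      log (ff beta gams lams lamf lam mus muf hs hf eta r) +
        beta ^ 2 * gams ^ 2 * (r' - r) / 2 := by
    rw [← log_exp (beta ^ 2 * gams ^ 2 * (r' - r) / 2), ← log_mul (ff_pos r).ne' (exp_ne_zero _)]
    exact log_le_log (ff_pos r') (ff_le_ff_mul_exp hbeta.le hr hrr'.le)
  have hgain : beta⁻¹ * (beta ^ 2 * gams ^ 2 * (r' - r) / 2) < gams * (r' - r) := by
    have hpos := mul_pos (mul_pos hgams (sub_pos.mpr hrr')) (sub_pos.mpr hbg)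
    field_simp
    nlinarith
  have hscaled := mul_le_mul_of_nonneg_left hlog (inv_nonneg.mpr hbeta.le)
  simp only [FF]
  linarith

end Functional

theorem high_temperature_unique_maximizer_general (gams lams lamf lam mus muf hs hf eta : ℝ)
    (hgams : 0 < gams) :
    (∀ beta : ℝ, 0 < beta → beta * gams < 2 →
      StrictAntiOn (fun r => FF beta gams lams lamf lam mus muf hs hf eta r) (Set.Ioi (0 : ℝ)) ∧
      (∀ r' : ℝ, 0 ≤ r' → FF beta gams lams lamf lam mus muf hs hf eta r' ≤ FF beta gams lams lamf lam mus muf hs hf eta 0) ∧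
      (∀ rb : ℝ, 0 ≤ rb →
        (∀ r' : ℝ, 0 ≤ r' → FF beta gams lams lamf lam mus muf hs hf eta r' ≤ FF beta gams lams lamf lam mus muf hs hf eta rb) → rb = 0)) ∧
    (∃ beta0 : ℝ, 0 < beta0 ∧ ∀ beta : ℝ, 0 < beta → beta < beta0 →
      (∀ r' : ℝ, 0 ≤ r' → FF beta gams lams lamf lam mus muf hs hf eta r' ≤ FF beta gams lams lamf lam mus muf hs hf eta 0) ∧
      (∀ rb : ℝ, 0 ≤ rb →
        (∀ r' : ℝ, 0 ≤ r' → FF beta gams lams lamf lam mus muf hs hf eta r' ≤ FF beta gams lams lamf lam mus muf hs hf eta rb) → rb = 0)) := by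
  refine ⟨fun beta hbeta hbg => ?_, 2 / gams, by positivity, fun beta hbeta hlt => ?_⟩
  · have hF : StrictAntiOn (fun r => FF beta gams lams lamf lam mus muf hs hf eta r) (Set.Ici 0) :=
      FF_strictAntiOn hgams hbeta hbg
    exact ⟨hF.mono Set.Ioi_subset_Ici_self, hF.isMaxOn_left_and_eq_left⟩
  · have hbg : beta * gams < 2 := by rwa [lt_div_iff₀ hgams] at hlt
    exact (FF_strictAntiOn hgams hbeta hbg).isMaxOn_left_and_eq_left

/-- high-temperature regime: if `β·γ_s < 2` then `F` is strictly
decreasing on `(0,∞)`, so `r = 0` is the unique maximizer over `[0,∞)`; in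
particular, for fixed remaining parameters there is `β₀ > 0` such that for all
`β ∈ (0, β₀)` the unique maximizer is `0`. -/
theorem high_temperature_unique_maximizer (gams lams lamf lam mus muf hs hf eta : ℝ)
    (hgams : 0 < gams) (hlams : 0 ≤ lams) (hlamf : 0 ≤ lamf) (hlam : 0 ≤ lam) :
    (∀ beta : ℝ, 0 < beta → beta * gams < 2 →
      StrictAntiOn (fun r => FF beta gams lams lamf lam mus muf hs hf eta r) (Set.Ioi (0 : ℝ)) ∧
      (∀ r' : ℝ, 0 ≤ r' → FF beta gams lams lamf lam mus muf hs hf eta r' ≤ FF beta gams lams lamf lam mus muf hs hf eta 0) ∧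
      (∀ rb : ℝ, 0 ≤ rb →
        (∀ r' : ℝ, 0 ≤ r' → FF beta gams lams lamf lam mus muf hs hf eta r' ≤ FF beta gams lams lamf lam mus muf hs hf eta rb) → rb = 0)) ∧
    (∃ beta0 : ℝ, 0 < beta0 ∧ ∀ beta : ℝ, 0 < beta → beta < beta0 →
      (∀ r' : ℝ, 0 ≤ r' → FF beta gams lams lamf lam mus muf hs hf eta r' ≤ FF beta gams lams lamf lam mus muf hs hf eta 0) ∧
      (∀ rb : ℝ, 0 ≤ rb →
        (∀ r' : ℝ, 0 ≤ r' → FF beta gams lams lamf lam mus muf hs hf eta r' ≤ FF beta gams lams lamf lam mus muf hs hf eta rb) → rb = 0)) :=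
  high_temperature_unique_maximizer_general gams lams lamf lam mus muf hs hf eta hgams
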